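/- Let P be a Horn clause program and k ∈ ℕ. If S is a model of P^{≤k} and T is a model of LINEARIZE(P^{≤k+1}, S), then the interpretation U consisting of the indexed atoms of dimension index at most k that belong to S together with the indexed atoms of dimension index k+1 that belong to T is a model of P^{≤k+1}. -/

import Mathlib

/-!
Every clause of `P^{≤m}` has head dimension at most `m` and body dimensions at most that of
its head. So a clause of `P^{≤k+1}` whose body holds in `U` either has a head of dimension
`≤ k`, in which case it is already a clause of `P^{≤k}` with its body in `S`, or has a head of
dimension `k + 1`, in which case its body atoms of dimension `≤ k` lie in `S` and the rest in `T`,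
so its linearization is a clause of `LINEARIZE(P^{≤k+1}, S)` fired by `T`.
-/

/-- An indexed atom `a^{=d}` (when `isExact = true`) or `a^{≤d}` (when `isExact = false`),
where `d` is the dimension index. -/
structure IAtom (β : Type) where
  atom : β
  idx : ℕ
  isExact : Bool
deriving DecidableEq

/-- A (ground) Horn clause program over atoms `γ`: a set of clauses `(head, body)`. -/
abbrev Program (γ : Type) := Set (γ × List γ)

/-- The at-most-`k`-dimension program `P^{≤k}`. -/
def kdim {β : Type} (P : Program β) (k : ℕ) : Program (IAtom β) :=
  { c |
    -- (i) fact clauses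
    (∃ h, (h, ([] : List β)) ∈ P ∧ c = (⟨h, 0, true⟩, [])) ∨
    -- (ii) linear clauses
    (∃ h b d, (h, [b]) ∈ P ∧ d ≤ k ∧
      c = (⟨h, d, true⟩, [⟨b, d, true⟩])) ∨
    -- (iii) non-linear clauses, one body atom of exact dimension d
    (∃ h B d j, (h, B) ∈ P ∧ 1 < B.length ∧ 1 ≤ d ∧ d ≤ k ∧ j < B.length ∧
      c = ((⟨h, d, true⟩ : IAtom β),
        B.mapIdx fun i b =>
          if i = j then (⟨b, d, true⟩ : IAtom β) else ⟨b, d - 1, false⟩)) ∨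
    -- (iv) non-linear clauses, two body atoms of exact dimension d-1
    (∃ h B d, ∃ J : Finset ℕ, (h, B) ∈ P ∧ 1 < B.length ∧ 1 ≤ d ∧ d ≤ k ∧
      J.card = 2 ∧ (∀ i ∈ J, i < B.length) ∧ (2 ≤ d ∨ B.length = 2) ∧
      c = ((⟨h, d, true⟩ : IAtom β),
        B.mapIdx fun i b =>
          if i ∈ J then (⟨b, d - 1, true⟩ : IAtom β) else ⟨b, d - 2, false⟩)) ∨
    -- (v) ε-clauses
    (∃ h d e, e ≤ d ∧ d ≤ k ∧
      c = ((⟨h, d, false⟩ : IAtom β), [(⟨h, e, true⟩ : IAtom β)])) }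

/-- `LINEARIZE(Q, S)`: keep a clause iff every body atom of dimension index `≤ k`
belongs to `S`, deleting those body atoms from the kept clause. -/
def linearize {β : Type} (Q : Program (IAtom β)) (k : ℕ) (S : Set (IAtom β)) :
    Program (IAtom β) :=
  { c | ∃ c' ∈ Q, (∀ a ∈ c'.2, a.idx ≤ k → a ∈ S) ∧
        c = (c'.1, c'.2.filter fun a => decide (k < a.idx)) }

/-- `M` is a model of the indexed program `Q` (`fbl` is the distinguished `false` symbol):
`M` contains no indexed atom of `false`, and for every clause, whenever every body atom
is in `M` then the head is in `M`. -/
def IsIModel {β : Type} (fbl : β) (Q : Program (IAtom β)) (M : Set (IAtom β)) : Prop :=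
  (∀ a ∈ M, a.atom ≠ fbl) ∧ ∀ c ∈ Q, (∀ b ∈ c.2, b ∈ M) → c.1 ∈ M

section Kdim

variable {β : Type} {P : Program β} {m : ℕ} {c : IAtom β × List (IAtom β)}

lemma head_idx_le_of_mem_kdim (hc : c ∈ kdim P m) : c.1.idx ≤ m := by
  rcases hc with ⟨_, _, rfl⟩ | ⟨_, _, _, _, hd, rfl⟩ | ⟨_, _, _, _, _, _, _, hd, _, rfl⟩
    | ⟨_, _, _, _, _, _, _, hd, _, _, _, rfl⟩ | ⟨_, _, _, _, hd, rfl⟩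
  · exact Nat.zero_le m
  all_goals exact hd

lemma idx_le_head_idx_of_mem_kdim (hc : c ∈ kdim P m) : ∀ b ∈ c.2, b.idx ≤ c.1.idx := by
  intro b hb
  rcases hc with ⟨_, _, rfl⟩ | ⟨_, _, _, _, _, rfl⟩ | ⟨_, _, _, _, _, _, _, _, _, rfl⟩
    | ⟨_, _, _, _, _, _, _, _, _, _, _, rfl⟩ | ⟨_, _, _, he, _, rfl⟩
  · simp at hb
  · rw [List.mem_singleton.mp hb]
  · obtain ⟨i, _, rfl⟩ := List.mem_mapIdx.mp hb
    split <;> simp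
  · obtain ⟨i, _, rfl⟩ := List.mem_mapIdx.mp hb
    split <;> simp
  · rw [List.mem_singleton.mp hb]
    exact he

lemma mem_kdim_of_head_idx_le {k : ℕ} (hc : c ∈ kdim P m) (hk : c.1.idx ≤ k) :
    c ∈ kdim P k := by
  rcases hc with ⟨h, h1, rfl⟩ | ⟨h, b, d, h1, -, rfl⟩
    | ⟨h, B, d, j, h1, h2, h3, -, h5, rfl⟩
    | ⟨h, B, d, J, h1, h2, h3, -, h5, h6, h7, rfl⟩ | ⟨h, d, e, h1, -, rfl⟩
  · exact Or.inl ⟨h, h1, rfl⟩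
  · exact Or.inr <| Or.inl ⟨h, b, d, h1, hk, rfl⟩
  · exact Or.inr <| Or.inr <| Or.inl ⟨h, B, d, j, h1, h2, h3, hk, h5, rfl⟩
  · exact Or.inr <| Or.inr <| Or.inr <| Or.inl
      ⟨h, B, d, J, h1, h2, h3, hk, h5, h6, h7, rfl⟩
  · exact Or.inr <| Or.inr <| Or.inr <| Or.inr ⟨h, d, e, h1, hk, rfl⟩

end Kdim

theorem model_of_kdim_succ_general {β : Type} (fbl : β) (P : Program β)
    (k : ℕ)
    (S T : Set (IAtom β))
    (hS : IsIModel fbl (kdim P k) S)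
    (hT : IsIModel fbl (linearize (kdim P (k + 1)) k S) T) :
    IsIModel fbl (kdim P (k + 1))
      ({a | a ∈ S ∧ a.idx ≤ k} ∪ {a | a ∈ T ∧ a.idx = k + 1}) := by
  refine ⟨fun a ha => ha.elim (fun ha => hS.1 a ha.1) (fun ha => hT.1 a ha.1), ?_⟩
  intro c hc hbody
  have low_mem_S : ∀ b ∈ c.2, b.idx ≤ k → b ∈ S := fun b hb hbk =>
    (hbody b hb).elim (·.1) (fun h => absurd h.2 (by omega))
  rcases (head_idx_le_of_mem_kdim hc).lt_or_eq with hlt | heq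
  · have hle : c.1.idx ≤ k := Nat.le_of_lt_succ hlt
    refine Or.inl ⟨hS.2 c (mem_kdim_of_head_idx_le hc hle) fun b hb => ?_, hle⟩
    exact low_mem_S b hb ((idx_le_head_idx_of_mem_kdim hc b hb).trans hle)
  · set high := c.2.filter fun a => decide (k < a.idx)
    have hlin : (c.1, high) ∈ linearize (kdim P (k + 1)) k S := ⟨c, hc, low_mem_S, rfl⟩
    have high_mem_T : ∀ b ∈ high, b ∈ T := by
      intro b hb
      obtain ⟨hb, hkb⟩ := List.mem_filter.mp hb
      have hkb : k < b.idx := of_decide_eq_true hkb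
      exact (hbody b hb).elim (fun h => absurd h.2 (by omega)) (·.1)
    exact Or.inr ⟨hT.2 (c.1, high) hlin high_mem_T, heq⟩

/-- if `S` is a model of `P^{≤k}` and `T` a model of
`LINEARIZE(P^{≤k+1}, S)`, then the atoms of dimension index `≤ k` in `S` together with
the atoms of dimension index `k+1` in `T` form a model of `P^{≤k+1}`. -/
theorem model_of_kdim_succ {β : Type} (fbl : β) (P : Program β)
    (hP : ∀ c ∈ P, fbl ∉ c.2) (k : ℕ)
    (S T : Set (IAtom β))
    (hS : IsIModel fbl (kdim P k) S)
    (hT : IsIModel fbl (linearize (kdim P (k + 1)) k S) T) :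
    IsIModel fbl (kdim P (k + 1))
      ({a | a ∈ S ∧ a.idx ≤ k} ∪ {a | a ∈ T ∧ a.idx = k + 1}) :=
  model_of_kdim_succ_general fbl P k S T hS hT
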